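/- arXiv:2412.08153 — 7 statements merged into one kernel-verified Lean document; each statement's English description precedes it below -/
import Mathlib

section
/- Let R be a commutative ring and n a natural number. A submodule N of the free R-module R^n is semiprime (i.e., for every m ∈ R^n, m ∈ (N : m)•R^n implies m ∈ N) if and only if for every element m = (r_1, …, r_n) ∈ R^n such that r_1•m, …, r_n•m ∈ N, one has m ∈ N. -/
/-- The ideal `(N : m) = {r : R | r • m ∈ N}` attached to a submodule `N` and `m ∈ M`. -/
def pointColon {R M : Type*} [CommRing R] [AddCommGroup M] [Module R M]
    (N : Submodule R M) (m : M) : Ideal R :=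
  N.comap (LinearMap.toSpanSingleton R M m)

/-- A submodule `N` of `M` is semiprime if for every `m ∈ M`,
`m ∈ (N : m) • M` implies `m ∈ N`. -/
def IsSemiprimeSub {R M : Type*} [CommRing R] [AddCommGroup M] [Module R M]
    (N : Submodule R M) : Prop :=
  ∀ m : M, m ∈ pointColon N m • (⊤ : Submodule R M) → m ∈ N

/-- A submodule `P` of `M` is prime if `P ≠ M` and `r • m ∈ P` implies
`m ∈ P` or `r • M ⊆ P`. -/
def IsPrimeSub {R M : Type*} [CommRing R] [AddCommGroup M] [Module R M]
    (P : Submodule R M) : Prop :=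
  P ≠ ⊤ ∧ ∀ (r : R) (m : M), r • m ∈ P → m ∈ P ∨ ∀ x : M, r • x ∈ P

/-- The first radical `N^(1)` of `N`: the submodule generated by all `m`
with `m ∈ (N : m) • M`. -/
def firstRadical {R M : Type*} [CommRing R] [AddCommGroup M] [Module R M]
    (N : Submodule R M) : Submodule R M :=
  Submodule.span R {m : M | m ∈ pointColon N m • (⊤ : Submodule R M)}

theorem semiprime_iff_free_module (R : Type*) [CommRing R] (n : ℕ)
    (N : Submodule R (Fin n → R)) :
    IsSemiprimeSub N ↔ ∀ m : Fin n → R, (∀ i : Fin n, m i • m ∈ N) → m ∈ N := by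
  constructor
  · intro h m hm
    apply h m
    have heq : m = ∑ i : Fin n, m i • (Pi.single i (1 : R) : Fin n → R) := by
      ext j
      simp [Finset.sum_apply, Pi.single_apply]
    have hsum : (∑ i : Fin n, m i • (Pi.single i (1 : R) : Fin n → R)) ∈
        pointColon N m • (⊤ : Submodule R (Fin n → R)) :=
      Submodule.sum_mem _ fun i _ => Submodule.smul_mem_smul (hm i) trivial
    rwa [← heq] at hsum
  · intro h m hm
    apply h m
    intro i
    have h1 : m i ∈ (pointColon N m • (⊤ : Submodule R (Fin n → R))).map
        (LinearMap.proj i : (Fin n → R) →ₗ[R] R) :=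
      Submodule.mem_map_of_mem hm
    rw [Submodule.map_smul''] at h1
    have h3 := Submodule.smul_mono le_rfl le_top h1
    rwa [smul_eq_mul, Ideal.mul_top] at h3
end

section
/- Let R be a commutative ring, M an R-module, and N a semiprime submodule of M. Then for all r ∈ R and m ∈ M, if r^2•m ∈ N, then r•m ∈ N; equivalently, the ideal (N : m) = {r ∈ R : r•m ∈ N} is a semiprime (radical) ideal of R for every m ∈ M. -/
theorem semiprime_pointColon_radical {R M : Type*} [CommRing R] [AddCommGroup M]
    [Module R M] (N : Submodule R M) (hN : IsSemiprimeSub N) :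
    (∀ (r : R) (m : M), r ^ 2 • m ∈ N → r • m ∈ N) ∧
      ∀ (m : M) (r : R), r ^ 2 ∈ pointColon N m → r ∈ pointColon N m := by
  have key : ∀ (r : R) (m : M), r ^ 2 • m ∈ N → r • m ∈ N := by
    intro r m h
    apply hN (r • m)
    have hr : r ∈ pointColon N (r • m) := by
      simp only [pointColon, Submodule.mem_comap, LinearMap.toSpanSingleton_apply]
      rwa [smul_smul, ← sq]
    exact Submodule.smul_mem_smul hr Submodule.mem_top
  exact ⟨key, fun m r h => key r m h⟩
end

section
/- Let R be a commutative ring, M an R-module, and M' ⊆ N submodules of M. If N is a semiprime submodule of M, then the image N/M' of N in the quotient module M/M' is a semiprime submodule of M/M'. -/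
theorem semiprime_map_quotient {R M : Type*} [CommRing R] [AddCommGroup M] [Module R M]
    (M' N : Submodule R M) (hle : M' ≤ N) (hN : IsSemiprimeSub N) :
    IsSemiprimeSub (N.map M'.mkQ) := by
  intro mbar hmem
  obtain ⟨m, rfl⟩ := M'.mkQ_surjective mbar
  -- key: the point colon in the quotient equals the point colon downstairs
  have hcolon : pointColon (N.map M'.mkQ) (M'.mkQ m) = pointColon N m := by
    ext r
    simp only [pointColon, Submodule.mem_comap, LinearMap.toSpanSingleton_apply]
    rw [← map_smul]
    constructor
    · intro h
      have : r • m ∈ Submodule.comap M'.mkQ (Submodule.map M'.mkQ N) := h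
      rw [Submodule.comap_map_eq, Submodule.ker_mkQ, sup_eq_left.mpr hle] at this
      exact this
    · intro h
      exact Submodule.mem_map_of_mem h
  rw [hcolon] at hmem
  have htop : (⊤ : Submodule R (M ⧸ M')) = Submodule.map M'.mkQ ⊤ := by
    rw [Submodule.map_top, Submodule.range_mkQ]
  rw [htop, ← Submodule.map_smul''] at hmem
  obtain ⟨x, hx, hxm⟩ := hmem
  have hdiff : m - x ∈ M' := by
    rw [Submodule.mkQ_apply, Submodule.mkQ_apply, eq_comm, Submodule.Quotient.eq] at hxm
    exact hxm
  have hcolon2 : pointColon N m = pointColon N x := by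
    ext r
    simp only [pointColon, Submodule.mem_comap, LinearMap.toSpanSingleton_apply]
    have h1 : r • (m - x) ∈ N := hle (M'.smul_mem r hdiff)
    rw [smul_sub] at h1
    constructor
    · intro h; have := N.sub_mem h h1; simpa using this
    · intro h; have := N.add_mem h1 h; simpa using this
  rw [hcolon2] at hx
  have hxN : x ∈ N := hN x hx
  have hmN : m ∈ N := by
    have := N.add_mem hxN (hle hdiff); simpa using this
  exact Submodule.mem_map_of_mem hmN
end

section
/- Let R be a commutative ring, M an R-module, and M' a submodule of M. The assignment N ↦ N/M' establishes a one-to-one correspondence between the set of semiprime submodules of M containing M' and the set of semiprime submodules of M/M'. -/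
lemma mem_pointColon {R M : Type*} [CommRing R] [AddCommGroup M] [Module R M]
    {N : Submodule R M} {m : M} {r : R} : r ∈ pointColon N m ↔ r • m ∈ N := by
  simp [pointColon, Submodule.mem_comap, LinearMap.toSpanSingleton_apply]

theorem semiprime_quotient_correspondence {R M : Type*} [CommRing R] [AddCommGroup M]
    [Module R M] (M' : Submodule R M) :
    Set.BijOn (fun N : Submodule R M => N.map M'.mkQ)
      {N : Submodule R M | M' ≤ N ∧ IsSemiprimeSub N}
      {K : Submodule R (M ⧸ M') | IsSemiprimeSub K} := by
  have htop : (⊤ : Submodule R (M ⧸ M')) = (⊤ : Submodule R M).map M'.mkQ := by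
    rw [Submodule.map_top, Submodule.range_mkQ]
  refine ⟨?_, ?_, ?_⟩
  · rintro N ⟨hMN, hN⟩
    intro q hq
    obtain ⟨m, rfl⟩ := M'.mkQ_surjective q
    have hcol : pointColon (N.map M'.mkQ) (M'.mkQ m) = pointColon N m := by
      ext r
      simp only [mem_pointColon, ← map_smul, Submodule.mem_map]
      constructor
      · rintro ⟨x, hx, hxe⟩
        have : r • m - x ∈ M' := by
          rw [← Submodule.Quotient.eq]; exact hxe.symm
        have := N.add_mem (hMN this) hx
        simpa using this
      · intro h; exact ⟨r • m, h, rfl⟩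
    rw [hcol, htop, ← Submodule.map_smul''] at hq
    obtain ⟨x, hx, hxe⟩ := hq
    have hxm : x - m ∈ M' := by rw [← Submodule.Quotient.eq]; exact hxe
    have hcol2 : pointColon N x = pointColon N m := by
      ext r
      simp only [mem_pointColon]
      have hr : ∀ s : R, s • (x - m) ∈ N := fun s => hMN (M'.smul_mem s hxm)
      constructor
      · intro h
        have := N.sub_mem h (hr r)
        simpa [smul_sub] using this
      · intro h
        have := N.add_mem h (hr r)
        rw [smul_sub] at this
        simpa using this
    have hxN : x ∈ N := hN x (by rw [hcol2]; exact hx)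
    have : m ∈ N := by
      have := N.sub_mem hxN (hMN hxm)
      simpa using this
    exact Submodule.mem_map_of_mem this
  · rintro N1 ⟨h1, _⟩ N2 ⟨h2, _⟩ he
    simp only at he
    have := congrArg (Submodule.comap M'.mkQ) he
    rwa [Submodule.comap_map_eq, Submodule.comap_map_eq, Submodule.ker_mkQ,
      sup_eq_left.mpr h1, sup_eq_left.mpr h2] at this
  · rintro K hK
    refine ⟨K.comap M'.mkQ, ⟨?_, ?_⟩, ?_⟩
    · intro x hx
      have : M'.mkQ x = 0 := by simpa [Submodule.Quotient.mk_eq_zero] using hx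
      simp [Submodule.mem_comap, this]
    · intro m hm
      have hcol : pointColon (K.comap M'.mkQ) m = pointColon K (M'.mkQ m) := by
        ext r
        simp [mem_pointColon, Submodule.mem_comap]
      rw [hcol] at hm
      have : M'.mkQ m ∈ pointColon K (M'.mkQ m) • (⊤ : Submodule R (M ⧸ M')) := by
        rw [htop, ← Submodule.map_smul'']
        exact Submodule.mem_map_of_mem hm
      exact hK _ this
    · exact Submodule.map_comap_eq_of_surjective M'.mkQ_surjective K
end

section
/- Let R be a commutative ring, M an R-module, N a submodule of M, and P a prime submodule of M with N ⊆ P. Then the first radical N^(1) of N is contained in P. -/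
theorem firstRadical_le_prime {R M : Type*} [CommRing R] [AddCommGroup M] [Module R M]
    (N P : Submodule R M) (hP : IsPrimeSub P) (hle : N ≤ P) :
    firstRadical N ≤ P := by
  rw [firstRadical, Submodule.span_le]
  intro m hm
  by_cases hmP : m ∈ P
  · exact hmP
  · -- show (N : m) • ⊤ ≤ P, then m ∈ P, contradiction
    have key : pointColon N m • (⊤ : Submodule R M) ≤ P := by
      apply Submodule.smul_le.mpr
      intro r hr x _
      have hrm : r • m ∈ P := hle hr
      rcases hP.2 r m hrm with h | h
      · exact absurd h hmP
      · exact h x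
    exact absurd (key hm) hmP
end

section
/- Let R be a commutative ring, M a finitely generated R-module, and N a submodule of M. Then the union ⋃_i N^(i) of the iterated radicals of N is a semiprime submodule of M. -/
section aux

variable {R M : Type*} [CommRing R] [AddCommGroup M] [Module R M]

lemma pointColon_mono {N N' : Submodule R M} (h : N ≤ N') (m : M) :
    pointColon N m ≤ pointColon N' m :=
  Submodule.comap_mono h

lemma le_firstRadical (N : Submodule R M) : N ≤ firstRadical N := by
  intro m hm
  apply Submodule.subset_span
  have h1 : (1 : R) ∈ pointColon N m := by
    simpa [pointColon] using hm
  have : pointColon N m = ⊤ := by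
    rwa [Ideal.eq_top_iff_one]
  simp [Set.mem_setOf_eq, this, Submodule.top_smul]

lemma firstRadical_mono {N N' : Submodule R M} (h : N ≤ N') :
    firstRadical N ≤ firstRadical N' := by
  apply Submodule.span_mono
  intro m hm
  exact Submodule.smul_mono_left (pointColon_mono h m) hm

lemma it_succ (N : Submodule R M) (i : ℕ) :
    firstRadical^[i + 1] N = firstRadical (firstRadical^[i] N) :=
  Function.iterate_succ_apply' _ _ _

lemma iterate_mono (N : Submodule R M) :
    Monotone (fun i : ℕ => firstRadical^[i + 1] N) := by
  apply monotone_nat_of_le_succ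
  intro i
  rw [it_succ N (i + 1)]
  exact le_firstRadical _

lemma iSup_smul_top (I : ℕ →o Ideal R) :
    (⨆ i, I i) • (⊤ : Submodule R M) = ⨆ i, I i • (⊤ : Submodule R M) := by
  apply le_antisymm
  · rw [Submodule.smul_le]
    intro r hr x _
    obtain ⟨i, hi⟩ := (Submodule.mem_iSup_of_chain I r).mp hr
    exact Submodule.mem_iSup_of_mem i (Submodule.smul_mem_smul hi trivial)
  · exact iSup_le fun i => Submodule.smul_mono_left (le_iSup _ i)

end aux

theorem union_iterated_radical_semiprime {R M : Type*} [CommRing R] [AddCommGroup M]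
    [Module R M] [Module.Finite R M] (N : Submodule R M) :
    ∃ K : Submodule R M, IsSemiprimeSub K ∧
      (K : Set M) = ⋃ i : ℕ, (firstRadical^[i + 1] N : Set M) := by
  set g : ℕ →o Submodule R M := ⟨fun i => firstRadical^[i + 1] N, iterate_mono N⟩ with hg
  refine ⟨⨆ i, g i, ?_, Submodule.coe_iSup_of_chain g⟩
  intro m hm
  -- pointColon (⨆ i, g i) m = ⨆ i, pointColon (g i) m
  set I : ℕ →o Ideal R := ⟨fun i => pointColon (g i) m,
    fun i j hij => pointColon_mono (g.monotone hij) m⟩ with hI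
  have hcolon : pointColon (⨆ i, g i) m = ⨆ i, I i := by
    apply le_antisymm
    · intro r hr
      have : r • m ∈ ⨆ i, g i := hr
      obtain ⟨i, hi⟩ := (Submodule.mem_iSup_of_chain g _).mp this
      exact Submodule.mem_iSup_of_mem i hi
    · exact iSup_le fun i => pointColon_mono (le_iSup _ i) m
  rw [hcolon, iSup_smul_top] at hm
  have hmono : Monotone fun i => I i • (⊤ : Submodule R M) :=
    fun i j hij => Submodule.smul_mono_left (I.monotone hij)
  obtain ⟨i, hi⟩ := (Submodule.mem_iSup_of_chain ⟨fun i => I i • ⊤, hmono⟩ m).mp hm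
  have : m ∈ firstRadical (g i) := Submodule.subset_span hi
  have hstep : firstRadical (g i) = g (i + 1) := by
    show firstRadical (firstRadical^[i + 1] N) = firstRadical^[i + 1 + 1] N
    rw [it_succ N (i + 1)]
  rw [hstep] at this
  exact Submodule.mem_iSup_of_mem (i + 1) this
end

section
/- Let R be a commutative ring, M a finitely generated R-module, and N a submodule of M. Then the radical of N equals the union of the iterated radicals of N: √N = ⋃_i N^(i). -/
namespace RadicalAux

variable {R M : Type*} [CommRing R] [AddCommGroup M] [Module R M]

lemma mem_pointColon {N : Submodule R M} {m : M} {r : R} :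
    r ∈ pointColon N m ↔ r • m ∈ N := by
  simp [pointColon]

lemma pointColon_mono {N K : Submodule R M} (h : N ≤ K) (m : M) :
    pointColon N m ≤ pointColon K m :=
  Submodule.comap_mono h

lemma le_firstRadical (N : Submodule R M) : N ≤ firstRadical N := by
  intro m hm
  apply Submodule.subset_span
  have h1 : (1 : R) ∈ pointColon N m := by rw [mem_pointColon, one_smul]; exact hm
  have := Submodule.smul_mem_smul h1 (Submodule.mem_top (x := m))
  simpa using this

lemma firstRadical_le_of_prime {P N : Submodule R M} (hP : IsPrimeSub P) (hNP : N ≤ P) :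
    firstRadical N ≤ P := by
  rw [firstRadical, Submodule.span_le]
  intro w hw
  by_cases hwP : w ∈ P
  · exact hwP
  · have hle : pointColon N w • (⊤ : Submodule R M) ≤ P := by
      rw [Submodule.smul_le]
      intro a ha x _
      rcases hP.2 a w (hNP (mem_pointColon.mp ha)) with h | h
      · exact absurd h hwP
      · exact h x
    exact hle hw

/-- The increasing chain of iterated first radicals. -/
lemma efam_aux (N : Submodule R M) (i : ℕ) :
    firstRadical^[i + 1] N ≤ firstRadical^[i + 1 + 1] N := by
  rw [Function.iterate_succ_apply' firstRadical (i + 1) N]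
  exact le_firstRadical _

def efam (N : Submodule R M) : ℕ →o Submodule R M :=
  ⟨fun i => firstRadical^[i + 1] N, monotone_nat_of_le_succ (efam_aux N)⟩

lemma efam_succ (N : Submodule R M) (i : ℕ) :
    efam N (i + 1) = firstRadical (efam N i) := by
  show firstRadical^[i + 1 + 1] N = _
  rw [Function.iterate_succ_apply']
  rfl

lemma efam_le_of_prime {P N : Submodule R M} (hP : IsPrimeSub P) (hNP : N ≤ P) (i : ℕ) :
    efam N i ≤ P := by
  induction i with
  | zero =>
    show firstRadical^[1] N ≤ P
    rw [Function.iterate_one]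
    exact firstRadical_le_of_prime hP hNP
  | succ n ih =>
    rw [efam_succ]
    exact firstRadical_le_of_prime hP ih

lemma isSemiprimeSub_iSup_efam (N : Submodule R M) :
    IsSemiprimeSub (⨆ i, efam N i) := by
  intro m hm
  set G : ℕ →o Submodule R M :=
    ⟨fun i => pointColon (efam N i) m • (⊤ : Submodule R M),
      fun i j hij => Submodule.smul_mono_left (pointColon_mono ((efam N).monotone hij) m)⟩
      with hG
  have h1 : pointColon (⨆ i, efam N i) m • (⊤ : Submodule R M) ≤ ⨆ i, G i := by
    rw [Submodule.smul_le]
    intro a ha x _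
    have ham : a • m ∈ ⨆ i, efam N i := mem_pointColon.mp ha
    rw [Submodule.mem_iSup_of_chain] at ham
    obtain ⟨i, hi⟩ := ham
    exact Submodule.mem_iSup_of_mem i (Submodule.smul_mem_smul (mem_pointColon.mpr hi)
      Submodule.mem_top)
  have hm2 : m ∈ ⨆ i, G i := h1 hm
  rw [Submodule.mem_iSup_of_chain] at hm2
  obtain ⟨i, hi⟩ := hm2
  have : m ∈ firstRadical (efam N i) := Submodule.subset_span hi
  rw [← efam_succ] at this
  exact Submodule.mem_iSup_of_mem (i + 1) this

lemma semiprime_absorb {P : Submodule R M} (hP : IsSemiprimeSub P) {I : Ideal R} {z : M}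
    (hI : ∀ a ∈ I, a • z ∈ P) (hz : z ∈ P ⊔ I • (⊤ : Submodule R M)) : z ∈ P := by
  rw [Submodule.mem_sup] at hz
  obtain ⟨q, hq, y, hy, hqyz⟩ := hz
  have hIy : I • (⊤ : Submodule R M) ≤ pointColon P y • (⊤ : Submodule R M) := by
    apply Submodule.smul_mono_left
    intro a ha
    rw [mem_pointColon]
    have hyz : y = z - q := by rw [← hqyz]; abel
    rw [hyz, smul_sub]
    exact Submodule.sub_mem P (hI a ha) (Submodule.smul_mem P a hq)
  have hyP : y ∈ P := hP y (hIy hy)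
  have := Submodule.add_mem P hq hyP
  rwa [hqyz] at this

/-- The saturation of `J` at a prime `p`. -/
def satIdeal (p : Ideal R) (hp : p.IsPrime) (J : Ideal R) : Ideal R where
  carrier := {r | ∃ u, u ∉ p ∧ u * r ∈ J}
  zero_mem' := ⟨1, (Ideal.ne_top_iff_one p).mp hp.ne_top, by simpa using J.zero_mem⟩
  add_mem' := by
    rintro a b ⟨u, hu, hua⟩ ⟨v, hv, hvb⟩
    refine ⟨u * v, fun h => ((hp.mem_or_mem h).elim hu hv), ?_⟩
    have h2 : u * v * (a + b) = v * (u * a) + u * (v * b) := by ring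
    rw [h2]
    exact J.add_mem (J.mul_mem_left _ hua) (J.mul_mem_left _ hvb)
  smul_mem' := by
    rintro r a ⟨u, hu, hua⟩
    refine ⟨u, hu, ?_⟩
    have h2 : u * (r • a) = r * (u * a) := by rw [smul_eq_mul]; ring
    rw [h2]
    exact J.mul_mem_left _ hua

lemma mem_satIdeal {p : Ideal R} {hp : p.IsPrime} {J : Ideal R} {r : R} :
    r ∈ satIdeal p hp J ↔ ∃ u, u ∉ p ∧ u * r ∈ J := Iff.rfl

lemma minimalPrimes_pow_absorb {J p : Ideal R} (hp : p ∈ J.minimalPrimes) {a : R} (ha : a ∈ p) :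
    ∃ (k : ℕ) (u : R), u ∉ p ∧ u * a ^ k ∈ J := by
  by_contra hcon
  push_neg at hcon
  have h1p : (1 : R) ∉ p := (Ideal.ne_top_iff_one p).mp hp.1.1.ne_top
  set T : Submonoid R :=
    { carrier := {r | ∃ (u : R) (k : ℕ), u ∉ p ∧ u * a ^ k = r}
      one_mem' := ⟨1, 0, h1p, by simp⟩
      mul_mem' := by
        rintro x y ⟨u, j, hu, rfl⟩ ⟨v, k, hv, rfl⟩
        exact ⟨u * v, j + k, fun h => ((hp.1.1.mem_or_mem h).elim hu hv), by ring⟩ } with hT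
  have hdisj : Disjoint (J : Set R) (T : Set R) := by
    rw [Set.disjoint_left]
    rintro r hrJ ⟨u, k, hu, rfl⟩
    exact hcon k u hu hrJ
  obtain ⟨q, hq, hJq, hqT⟩ := Ideal.exists_le_prime_disjoint J T hdisj
  have hqp : q ≤ p := by
    intro r hr
    by_contra hrp
    exact Set.disjoint_left.mp hqT hr ⟨r, 0, hrp, by simp⟩
  have hpq : p ≤ q := hp.2 ⟨hq, hJq⟩ hqp
  exact Set.disjoint_left.mp hqT (hpq ha) ⟨1, 1, h1p, by simp⟩

lemma exists_fg_of_mem_smul_top {p : Ideal R} {y : M}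
    (hy : y ∈ p • (⊤ : Submodule R M)) :
    ∃ I : Ideal R, I.FG ∧ I ≤ p ∧ y ∈ I • (⊤ : Submodule R M) := by
  refine Submodule.smul_induction_on hy ?_ ?_
  · intro r hr x _
    refine ⟨Ideal.span {r}, ⟨{r}, by simp⟩, ?_, ?_⟩
    · rwa [Ideal.span_le, Set.singleton_subset_iff]
    · exact Submodule.smul_mem_smul (Ideal.subset_span rfl) Submodule.mem_top
  · rintro x y ⟨I₁, h1, h1p, hx⟩ ⟨I₂, h2, h2p, hy⟩
    exact ⟨I₁ ⊔ I₂, Submodule.FG.sup h1 h2, sup_le h1p h2p,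
      Submodule.add_mem _ (Submodule.smul_mono_left le_sup_left hx)
        (Submodule.smul_mono_left le_sup_right hy)⟩

lemma smul_mem_smul_top {I J : Ideal R} {t : R} {y : M}
    (hy : y ∈ I • (⊤ : Submodule R M)) (h : ∀ b ∈ I, t * b ∈ J) :
    t • y ∈ J • (⊤ : Submodule R M) := by
  refine Submodule.smul_induction_on (p := fun z => t • z ∈ J • (⊤ : Submodule R M)) hy ?_ ?_
  · intro b hb x _
    rw [smul_smul]
    exact Submodule.smul_mem_smul (h b hb) Submodule.mem_top
  · intro x y hx hy
    rw [smul_add]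
    exact Submodule.add_mem _ hx hy

lemma exists_uniform_sat {p J Q : Ideal R} (hp : p.IsPrime) (hQ : Q.FG)
    (h : Q ≤ satIdeal p hp J) : ∃ u, u ∉ p ∧ ∀ c ∈ Q, u * c ∈ J := by
  classical
  obtain ⟨T, hT⟩ := hQ
  have hmem : ∀ c ∈ T, ∃ u, u ∉ p ∧ u * c ∈ J := fun c hc =>
    h (hT ▸ Submodule.subset_span hc)
  choose! u hu1 hu2 using hmem
  haveI := hp
  refine ⟨∏ c ∈ T, u c, ?_, ?_⟩
  · have : (∏ c ∈ T, u c) ∈ p.primeCompl := Submonoid.prod_mem _ (fun c hc => hu1 c hc)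
    exact this
  · intro c hc
    have hle : Q ≤ Submodule.comap (LinearMap.lsmul R R (∏ c ∈ T, u c)) J := by
      rw [← hT, Ideal.span_le]
      intro x hx
      show (∏ c ∈ T, u c) • x ∈ J
      rw [smul_eq_mul, ← Finset.mul_prod_erase T u hx]
      have h2 : u x * (∏ c ∈ T.erase x, u c) * x = (∏ c ∈ T.erase x, u c) * (u x * x) := by ring
      rw [h2]
      exact J.mul_mem_left _ (hu2 x hx)
    have := hle hc
    simpa using this

lemma exists_prime_not_mem [Module.Finite R M] {E : Submodule R M} (hE : IsSemiprimeSub E)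
    {w : M} (hw : w ∉ E) :
    ∃ P : Submodule R M, IsPrimeSub P ∧ E ≤ P ∧ w ∉ P := by
  classical
  set J := pointColon E w with hJdef
  have hJtop : J ≠ ⊤ := by
    intro h
    have h1 : (1 : R) ∈ J := h ▸ Submodule.mem_top
    exact hw (by simpa using mem_pointColon.mp h1)
  have key : ∀ t : R, t • w ∈ E ⊔ J • (⊤ : Submodule R M) → t ∈ J := by
    intro t ht
    have : t • w ∈ E := by
      refine semiprime_absorb hE (fun a ha => ?_) ht
      rw [smul_comm]
      exact Submodule.smul_mem E t (mem_pointColon.mp ha)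
    exact mem_pointColon.mpr this
  obtain ⟨Mx, hMx, hJMx⟩ := Ideal.exists_le_maximal J hJtop
  obtain ⟨p, hp, -⟩ := (haveI := hMx.isPrime; Ideal.exists_minimalPrimes_le hJMx)
  have hpPrime : p.IsPrime := hp.1.1
  have hJp : J ≤ p := hp.1.2
  have h1p : (1 : R) ∉ p := (Ideal.ne_top_iff_one p).mp hpPrime.ne_top
  set L := E ⊔ p • (⊤ : Submodule R M) with hL
  have crux : ∀ s, s ∉ p → s • w ∉ L := by
    intro s hs hsw
    rw [hL, Submodule.mem_sup] at hsw
    obtain ⟨e, he, y, hy, heq⟩ := hsw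
    obtain ⟨I, hIfg, hIp, hyI⟩ := exists_fg_of_mem_smul_top hy
    have hrad : I ≤ (satIdeal p hpPrime J).radical := by
      intro c hc
      obtain ⟨k, u, hu, huk⟩ := minimalPrimes_pow_absorb hp (hIp hc)
      exact ⟨k, u, hu, huk⟩
    obtain ⟨K, hK⟩ := Ideal.exists_pow_le_of_le_radical_of_fg hrad hIfg
    obtain ⟨U, hU, hUJ⟩ := exists_uniform_sat hpPrime (Submodule.FG.pow hIfg K) hK
    -- descending induction
    have step : ∀ (j : ℕ) (v : R), v ∉ p → (∀ c ∈ (I ^ (j + 1) : Ideal R), v * c ∈ J) →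
        ∀ c ∈ (I ^ j : Ideal R), (v * s) * c ∈ J := by
      intro j v hv hvJ c hc
      have hyJ : (v * c) • y ∈ J • (⊤ : Submodule R M) := by
        refine smul_mem_smul_top hyI (fun b hb => ?_)
        have h2 : v * c * b = v * (c * b) := by ring
        rw [h2]
        exact hvJ _ (by rw [pow_succ]; exact Ideal.mul_mem_mul hc hb)
      have hmem : (v * s * c) • w ∈ E ⊔ J • (⊤ : Submodule R M) := by
        have h3 : v * s * c = v * c * s := by ring
        rw [h3, mul_smul, ← heq, smul_add]
        exact Submodule.add_mem_sup (Submodule.smul_mem E _ he) hyJ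
      have := key _ hmem
      have h4 : v * s * c = v * s * c := rfl
      rwa [show (v * s) * c = v * s * c by ring]
    have desc : ∀ (j : ℕ) (v : R), v ∉ p → (∀ c ∈ (I ^ j : Ideal R), v * c ∈ J) → False := by
      intro j
      induction j with
      | zero =>
        intro v hv hvJ
        have h1 : (1 : R) ∈ (I ^ 0 : Ideal R) := by rw [pow_zero, Ideal.one_eq_top]; trivial
        have := hvJ 1 h1
        rw [mul_one] at this
        exact hv (hJp this)
      | succ n ih =>
        intro v hv hvJ
        exact ih (v * s) (fun h => ((hpPrime.mem_or_mem h).elim hv hs)) (step n v hv hvJ)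
    exact desc K U hU hUJ
  refine ⟨{ carrier := {x | ∃ s, s ∉ p ∧ s • x ∈ L}
            zero_mem' := ⟨1, h1p, by simpa using L.zero_mem⟩
            add_mem' := ?_
            smul_mem' := ?_ }, ⟨?_, ?_⟩, ?_, ?_⟩
  · rintro a b ⟨s₁, hs₁, h₁⟩ ⟨s₂, hs₂, h₂⟩
    refine ⟨s₁ * s₂, fun h => ((hpPrime.mem_or_mem h).elim hs₁ hs₂), ?_⟩
    rw [smul_add]
    refine L.add_mem ?_ ?_
    · rw [mul_comm, mul_smul]; exact L.smul_mem _ h₁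
    · rw [mul_smul]; exact L.smul_mem _ h₂
  · rintro r x ⟨s, hs, hsx⟩
    exact ⟨s, hs, by rw [smul_comm]; exact L.smul_mem r hsx⟩
  · -- P ≠ ⊤
    intro h
    have : w ∈ ({x | ∃ s, s ∉ p ∧ s • x ∈ L} : Set M) := by
      have := h ▸ (Submodule.mem_top (R := R) (x := w))
      exact this
    obtain ⟨s, hs, hsw⟩ := this
    exact crux s hs hsw
  · -- prime property
    intro r x hrx
    by_cases hr : r ∈ p
    · right
      intro x'
      exact ⟨1, h1p, by
        rw [one_smul]
        exact Submodule.mem_sup_right (Submodule.smul_mem_smul hr Submodule.mem_top)⟩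
    · left
      obtain ⟨s, hs, hsrx⟩ := hrx
      exact ⟨s * r, fun h => ((hpPrime.mem_or_mem h).elim hs hr), by rwa [mul_smul]⟩
  · -- E ≤ P
    intro e he
    exact ⟨1, h1p, by rw [one_smul]; exact Submodule.mem_sup_left he⟩
  · -- w ∉ P
    rintro ⟨s, hs, hsw⟩
    exact crux s hs hsw

end RadicalAux

theorem radical_eq_union_iterated_radical {R M : Type*} [CommRing R] [AddCommGroup M]
    [Module R M] [Module.Finite R M] (N : Submodule R M) :
    ((sInf {P : Submodule R M | IsPrimeSub P ∧ N ≤ P} : Submodule R M) : Set M) =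
      ⋃ i : ℕ, (firstRadical^[i + 1] N : Set M) := by
  classical
  have hEq : sInf {P : Submodule R M | IsPrimeSub P ∧ N ≤ P} = ⨆ i, RadicalAux.efam N i := by
    apply le_antisymm
    · intro w hw
      by_contra hwE
      obtain ⟨P, hP, hEP, hwP⟩ :=
        RadicalAux.exists_prime_not_mem (RadicalAux.isSemiprimeSub_iSup_efam N) hwE
      have hNE : N ≤ ⨆ i, RadicalAux.efam N i := by
        refine le_trans ?_ (le_iSup (fun i => (RadicalAux.efam N i : Submodule R M)) 0)
        show N ≤ firstRadical^[0 + 1] N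
        rw [Function.iterate_one]
        exact RadicalAux.le_firstRadical N
      have hNP : N ≤ P := le_trans hNE hEP
      exact hwP (Submodule.mem_sInf.mp hw P ⟨hP, hNP⟩)
    · refine iSup_le fun i => le_sInf fun P hP => ?_
      exact RadicalAux.efam_le_of_prime hP.1 hP.2 i
  rw [hEq]
  exact Submodule.coe_iSup_of_chain (RadicalAux.efam N)
end
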